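/- arXiv:1312.3410 — 7 statements merged into one kernel-verified Lean document; each statement's English description precedes it below -/
import Mathlib

section
/- Let n ≥ 2 be an integer, T ∈ (0, ∞], k ∈ ℝ and δ > 0. Let f, x : [0, T) → ℝ be differentiable functions such that f(t) ≤ k for all t ∈ [0, T), x(0) ≤ -δ, and x'(t) ≤ -x(t)² - (2/(n-1))·x(t)·f'(t) for all t ∈ [0, T). Set t₁ := (1/δ)·exp(2(k - f(0))/(n-1)). Then t < t₁ and x(t) ≤ -1/(t₁ - t) for every t ∈ [0, T); in particular T ≤ t₁. -/
/-!
With `c = 2/(n-1)`, the integrating factor `w = x·exp(c f)` removes the `f'` term: the inequality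
becomes the Riccati inequality `w' ≤ -exp(-c f) w² ≤ -exp(-c k) w²`. Hence `w` stays negative and
`-1/w` grows at least at rate `exp(-c k)`, and since `-1/w` is positive it cannot do so beyond
time `t₁`.
-/

open Set Real

theorem antitoneOn_Icc_of_hasDerivWithinAt_nonpos {a b : ℝ} {g g' : ℝ → ℝ}
    (hg : ∀ s ∈ Icc a b, HasDerivWithinAt g (g' s) (Icc a b) s)
    (hg' : ∀ s ∈ Icc a b, g' s ≤ 0) : AntitoneOn g (Icc a b) := by
  refine antitoneOn_of_hasDerivWithinAt_nonpos (convex_Icc a b)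
    (fun s hs => (hg s hs).continuousWithinAt) (f' := g') (fun s hs => ?_) (fun s hs => ?_)
  · rw [interior_Icc] at hs ⊢
    exact (hg s (Ioo_subset_Icc_self hs)).mono Ioo_subset_Icc_self
  · rw [interior_Icc] at hs
    exact hg' s (Ioo_subset_Icc_self hs)

theorem neg_inv_add_mul_le_of_hasDerivWithinAt_le_neg_mul_sq {a b E : ℝ} {w w' : ℝ → ℝ}
    (hab : a ≤ b) (hE : 0 ≤ E)
    (hw : ∀ s ∈ Icc a b, HasDerivWithinAt w (w' s) (Icc a b) s)
    (hw' : ∀ s ∈ Icc a b, w' s ≤ -E * w s ^ 2) (ha : w a < 0) :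
    w b < 0 ∧ -(w b)⁻¹ + E * (b - a) ≤ -(w a)⁻¹ := by
  have hw_anti : AntitoneOn w (Icc a b) :=
    antitoneOn_Icc_of_hasDerivWithinAt_nonpos hw fun s hs => (hw' s hs).trans
      (by nlinarith [sq_nonneg (w s)])
  have hw_neg : ∀ s ∈ Icc a b, w s < 0 := fun s hs =>
    (hw_anti (left_mem_Icc.2 hab) hs hs.1).trans_lt ha
  have hg : ∀ s ∈ Icc a b, HasDerivWithinAt (fun s => -(w s)⁻¹ + E * s)
      (w' s / w s ^ 2 + E) (Icc a b) s := fun s hs => by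
    refine ((((hw s hs).inv (hw_neg s hs).ne).neg).add
      ((hasDerivWithinAt_id s _).const_mul E)).congr_deriv ?_
    ring
  have hg' : ∀ s ∈ Icc a b, w' s / w s ^ 2 + E ≤ 0 := fun s hs => by
    have hsq : 0 < w s ^ 2 := sq_pos_of_neg (hw_neg s hs)
    have : w' s / w s ^ 2 ≤ -E := by rw [div_le_iff₀ hsq]; linarith [hw' s hs]
    linarith
  have := antitoneOn_Icc_of_hasDerivWithinAt_nonpos hg hg' (left_mem_Icc.2 hab)
    (right_mem_Icc.2 hab) hab
  refine ⟨hw_neg b (right_mem_Icc.2 hab), ?_⟩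
  simp only at this
  linarith

theorem add_mul_mul_exp_le_neg_exp_mul_sq {c k f f' x x' : ℝ} (hc : 0 ≤ c) (hf : f ≤ k)
    (h : x' ≤ -x ^ 2 - c * x * f') :
    (x' + c * x * f') * exp (c * f) ≤ -exp (-(c * k)) * (x * exp (c * f)) ^ 2 := by
  have hexp : exp (-(c * k)) ≤ exp (-(c * f)) := exp_le_exp.2 (by nlinarith)
  calc (x' + c * x * f') * exp (c * f) ≤ -x ^ 2 * exp (c * f) :=
        mul_le_mul_of_nonneg_right (by linarith) (exp_pos _).le
    _ = -exp (-(c * f)) * (x * exp (c * f)) ^ 2 := by rw [exp_neg]; field_simp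
    _ ≤ -exp (-(c * k)) * (x * exp (c * f)) ^ 2 := by nlinarith [sq_nonneg (x * exp (c * f))]

theorem raychaudhuri_focusing_Icc {c k δ t : ℝ} {f f' x x' : ℝ → ℝ} (hc : 0 ≤ c)
    (hδ : 0 < δ) (ht : 0 ≤ t)
    (hf : ∀ s ∈ Icc 0 t, HasDerivWithinAt f (f' s) (Icc 0 t) s)
    (hx : ∀ s ∈ Icc 0 t, HasDerivWithinAt x (x' s) (Icc 0 t) s)
    (hfk : ∀ s ∈ Icc 0 t, f s ≤ k) (hx0 : x 0 ≤ -δ)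
    (hineq : ∀ s ∈ Icc 0 t, x' s ≤ -x s ^ 2 - c * x s * f' s) :
    t < 1 / δ * exp (c * (k - f 0)) ∧ x t ≤ -1 / (1 / δ * exp (c * (k - f 0)) - t) := by
  set t₁ := 1 / δ * exp (c * (k - f 0))
  set E := exp (-(c * k))
  set w : ℝ → ℝ := fun s => x s * exp (c * f s)
  have hE : 0 < E := exp_pos _
  have hw : ∀ s ∈ Icc 0 t, HasDerivWithinAt w ((x' s + c * x s * f' s) * exp (c * f s))
      (Icc 0 t) s := fun s hs => by
    refine ((hx s hs).mul ((hf s hs).const_mul c).exp).congr_deriv ?_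
    ring
  have hw0 : w 0 ≤ -(δ * exp (c * f 0)) := by
    simp only [w]; nlinarith [exp_pos (c * f 0)]
  have hδw : 0 < δ * exp (c * f 0) := by positivity
  obtain ⟨hwt, hriccati⟩ := neg_inv_add_mul_le_of_hasDerivWithinAt_le_neg_mul_sq ht hE.le hw
    (fun s hs => add_mul_mul_exp_le_neg_exp_mul_sq hc (hfk s hs) (hineq s hs))
    (hw0.trans_lt (neg_neg_of_pos hδw))
  have hw0_inv : -(w 0)⁻¹ ≤ E * t₁ := by
    have hE_t₁ : E * t₁ = (δ * exp (c * f 0))⁻¹ := by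
      simp only [E, t₁]
      rw [mul_inv, ← exp_neg, one_div, mul_left_comm, ← exp_add]
      congr 2
      ring
    rw [hE_t₁, ← inv_neg]
    exact inv_anti₀ hδw (by linarith)
  have hwt_inv : 0 < -(w t)⁻¹ := neg_pos.2 (inv_lt_zero.2 hwt)
  have hlt : t < t₁ := lt_of_mul_lt_mul_left (by linarith) hE.le
  refine ⟨hlt, ?_⟩
  have hwt_le : w t * (E * (t₁ - t)) ≤ -1 := by
    have := mul_le_mul_of_nonpos_left (show -(w t)⁻¹ ≤ E * (t₁ - t) by linarith) hwt.le
    rwa [mul_neg, mul_inv_cancel₀ hwt.ne] at this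
  have hE_le : E ≤ exp (-(c * f t)) := exp_le_exp.2 (by nlinarith [hfk t (right_mem_Icc.2 ht)])
  calc x t = w t * exp (-(c * f t)) := by simp only [w]; rw [exp_neg]; field_simp
    _ ≤ w t * E := mul_le_mul_of_nonpos_left hE_le hwt.le
    _ ≤ -1 / (t₁ - t) := by rwa [le_div_iff₀ (sub_pos.2 hlt), mul_assoc]

theorem stmt_0_general (n : ℕ) (hn : 2 ≤ n) (T : EReal) (k δ : ℝ) (hδ : 0 < δ)
    (f x f' x' : ℝ → ℝ)
    (D : Set ℝ) (hD : D = {t : ℝ | 0 ≤ t ∧ (t : EReal) < T})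
    (hf : ∀ t ∈ D, HasDerivWithinAt f (f' t) D t)
    (hx : ∀ t ∈ D, HasDerivWithinAt x (x' t) D t)
    (hfk : ∀ t ∈ D, f t ≤ k)
    (hx0 : x 0 ≤ -δ)
    (hineq : ∀ t ∈ D, x' t ≤ -(x t) ^ 2 - (2 / ((n : ℝ) - 1)) * x t * f' t)
    (t₁ : ℝ) (ht₁ : t₁ = (1 / δ) * Real.exp (2 * (k - f 0) / ((n : ℝ) - 1))) :
    (∀ t ∈ D, t < t₁ ∧ x t ≤ -1 / (t₁ - t)) ∧ T ≤ (t₁ : EReal) := by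
  have hc : 0 ≤ 2 / ((n : ℝ) - 1) := div_nonneg zero_le_two
    (sub_nonneg.2 (by exact_mod_cast (show 1 ≤ n by omega)))
  replace ht₁ : t₁ = 1 / δ * exp (2 / ((n : ℝ) - 1) * (k - f 0)) := by
    rw [ht₁, div_mul_eq_mul_div 2]
  have hbound : ∀ t ∈ D, t < t₁ ∧ x t ≤ -1 / (t₁ - t) := by
    intro t ht
    obtain ⟨ht0, htT⟩ : 0 ≤ t ∧ (t : EReal) < T := by rwa [hD] at ht
    have hsub : Icc 0 t ⊆ D := fun s hs => by
      rw [hD]; exact ⟨hs.1, (EReal.coe_le_coe_iff.2 hs.2).trans_lt htT⟩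
    rw [ht₁]
    exact raychaudhuri_focusing_Icc hc hδ ht0
      (fun s hs => (hf s (hsub hs)).mono hsub) (fun s hs => (hx s (hsub hs)).mono hsub)
      (fun s hs => hfk s (hsub hs)) hx0 (fun s hs => hineq s (hsub hs))
  refine ⟨hbound, not_lt.1 fun hlt => (hbound t₁ ?_).1.false⟩
  rw [hD]
  exact ⟨by rw [ht₁]; positivity, hlt⟩

/-- Lemma 2.1 (Raychaudhuri focusing estimate, `Ric_f ≥ 0` case):
a solution of `x' ≤ -x² - (2/(n-1)) x f'` on `[0,T)` with `f ≤ k` and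
`x(0) ≤ -δ < 0` satisfies `x(t) ≤ -1/(t₁ - t)` where
`t₁ = (1/δ)·exp(2(k - f(0))/(n-1))`; in particular `T ≤ t₁`. -/
theorem stmt_0 (n : ℕ) (hn : 2 ≤ n) (T : EReal) (hT : 0 < T) (k δ : ℝ) (hδ : 0 < δ)
    (f x f' x' : ℝ → ℝ)
    (D : Set ℝ) (hD : D = {t : ℝ | 0 ≤ t ∧ (t : EReal) < T})
    (hf : ∀ t ∈ D, HasDerivWithinAt f (f' t) D t)
    (hx : ∀ t ∈ D, HasDerivWithinAt x (x' t) D t)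
    (hfk : ∀ t ∈ D, f t ≤ k)
    (hx0 : x 0 ≤ -δ)
    (hineq : ∀ t ∈ D, x' t ≤ -(x t) ^ 2 - (2 / ((n : ℝ) - 1)) * x t * f' t)
    (t₁ : ℝ) (ht₁ : t₁ = (1 / δ) * Real.exp (2 * (k - f 0) / ((n : ℝ) - 1))) :
    (∀ t ∈ D, t < t₁ ∧ x t ≤ -1 / (t₁ - t)) ∧ T ≤ (t₁ : EReal) :=
  stmt_0_general n hn T k δ hδ f x f' x' D hD hf hx hfk hx0 hineq t₁ ht₁
end

section
/- Let n ≥ 2 be an integer, T ∈ (0, ∞], k ∈ ℝ and δ > 0. Let f, x : [0, T) → ℝ be differentiable functions such that f(t) ≤ k for all t ∈ [0, T), x(0) ≤ -δ, and x'(t) ≤ -x(t)² - (2/(n-1))·x(t)·f'(t) for all t ∈ [0, T). Then x(t) < 0 for all t ∈ [0, T); i.e., x never acquires a zero on its interval of definition. -/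
/-!
Multiplying by the integrating factor `exp (c f)`, with `c = 2/(n-1)`, turns the inequality into
`(x exp (c f))' = (x' + c x f') exp (c f) ≤ -x² exp (c f) ≤ 0`, so `x exp (c f)` is antitone and
keeps the strictly negative sign it has at `0`.
-/

open Real

lemma convex_setOf_nonneg_coe_lt (T : EReal) : Convex ℝ {t : ℝ | 0 ≤ t ∧ (t : EReal) < T} :=
  (Set.ordConnected_Ici.inter
    (Set.ordConnected_Iio.preimage_mono EReal.coe_strictMono.monotone)).convex

section IntegratingFactor

variable {D : Set ℝ} {x x' φ φ' : ℝ → ℝ}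

lemma antitoneOn_mul_exp_of_hasDerivWithinAt (hD : Convex ℝ D)
    (hx : ∀ t ∈ D, HasDerivWithinAt x (x' t) D t) (hφ : ∀ t ∈ D, HasDerivWithinAt φ (φ' t) D t)
    (h : ∀ t ∈ D, x' t + x t * φ' t ≤ 0) :
    AntitoneOn (fun t ↦ x t * exp (φ t)) D := by
  have hderiv : ∀ t ∈ D, HasDerivWithinAt (fun t ↦ x t * exp (φ t))
      ((x' t + x t * φ' t) * exp (φ t)) D t := fun t ht ↦
    ((hx t ht).mul (hφ t ht).exp).congr_deriv (by ring)
  refine antitoneOn_of_hasDerivWithinAt_nonpos hD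
    (fun t ht ↦ (hderiv t ht).continuousWithinAt)
    (fun t ht ↦ (hderiv t (interior_subset ht)).mono interior_subset) fun t ht ↦ ?_
  exact mul_nonpos_of_nonpos_of_nonneg (h t (interior_subset ht)) (exp_pos _).le

lemma neg_of_le_of_hasDerivWithinAt (hD : Convex ℝ D)
    (hx : ∀ t ∈ D, HasDerivWithinAt x (x' t) D t) (hφ : ∀ t ∈ D, HasDerivWithinAt φ (φ' t) D t)
    (h : ∀ t ∈ D, x' t + x t * φ' t ≤ 0) {s t : ℝ} (hs : s ∈ D) (ht : t ∈ D) (hst : s ≤ t)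
    (hxs : x s < 0) : x t < 0 := by
  have hmono := antitoneOn_mul_exp_of_hasDerivWithinAt hD hx hφ h hs ht hst
  have hneg : x t * exp (φ t) < 0 :=
    hmono.trans_lt (mul_neg_of_neg_of_pos hxs (exp_pos _))
  exact neg_of_mul_neg_left hneg (exp_pos _).le

end IntegratingFactor

theorem stmt_1_general (n : ℕ) (T : EReal) (δ : ℝ) (hδ : 0 < δ)
    (f x f' x' : ℝ → ℝ)
    (D : Set ℝ) (hD : D = {t : ℝ | 0 ≤ t ∧ (t : EReal) < T})
    (hf : ∀ t ∈ D, HasDerivWithinAt f (f' t) D t)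
    (hx : ∀ t ∈ D, HasDerivWithinAt x (x' t) D t)
    (hx0 : x 0 ≤ -δ)
    (hineq : ∀ t ∈ D, x' t ≤ -(x t) ^ 2 - (2 / ((n : ℝ) - 1)) * x t * f' t) :
    ∀ t ∈ D, x t < 0 := by
  subst hD
  intro t ht
  have h0 : (0 : ℝ) ∈ {t : ℝ | 0 ≤ t ∧ (t : EReal) < T} :=
    ⟨le_rfl, lt_of_le_of_lt (EReal.coe_le_coe_iff.mpr ht.1) ht.2⟩
  refine neg_of_le_of_hasDerivWithinAt (convex_setOf_nonneg_coe_lt T) hx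
    (fun t ht ↦ (hf t ht).const_mul (2 / ((n : ℝ) - 1))) (fun t ht ↦ ?_) h0 ht ht.1
    (by linarith)
  linarith [sq_nonneg (x t), hineq t ht]

/-- Intermediate claim in the proof of Lemma 2.1 (`T₀ = T`):
a solution of `x' ≤ -x² - (2/(n-1)) x f'` on `[0,T)` with `f ≤ k` and
`x(0) ≤ -δ < 0` remains strictly negative on `[0,T)`. -/
theorem stmt_1 (n : ℕ) (hn : 2 ≤ n) (T : EReal) (hT : 0 < T) (k δ : ℝ) (hδ : 0 < δ)
    (f x f' x' : ℝ → ℝ)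
    (D : Set ℝ) (hD : D = {t : ℝ | 0 ≤ t ∧ (t : EReal) < T})
    (hf : ∀ t ∈ D, HasDerivWithinAt f (f' t) D t)
    (hx : ∀ t ∈ D, HasDerivWithinAt x (x' t) D t)
    (hfk : ∀ t ∈ D, f t ≤ k)
    (hx0 : x 0 ≤ -δ)
    (hineq : ∀ t ∈ D, x' t ≤ -(x t) ^ 2 - (2 / ((n : ℝ) - 1)) * x t * f' t) :
    ∀ t ∈ D, x t < 0 :=
  stmt_1_general n T δ hδ f x f' x' D hD hf hx hx0 hineq
end

section
/- Let n ≥ 2 be an integer, T ∈ (0, ∞], k ∈ ℝ and δ > 0. Let f, x : [0, T) → ℝ be differentiable functions such that f(t) ≤ k for all t ∈ [0, T), x(0) ≤ -δ, and x'(t) ≤ -x(t)² - (2/(n-1))·x(t)·f'(t) for all t ∈ [0, T). Then for every t ∈ [0, T), t < (1/δ)·exp(2(k - f(0))/(n-1)) and x(t) ≤ -exp(2(k - f(t))/(n-1)) / ((1/δ)·exp(2(k - f(0))/(n-1)) - t). -/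
/-!
Multiplying by the integrating factor `exp (c (f - k))`, `c = 2/(n-1)`, turns the inequality into
`y' ≤ -exp (c (k - f)) y² ≤ -y²` for `y = x exp (c (f - k))`, because `f ≤ k`. Along a negative
solution of the Riccati inequality `y' ≤ -y²` the function `t - 1/y t` is nonincreasing, which
bounds the blow-up time and gives `y t ≤ -1/(τ - t)` with `τ = (1/δ) exp (c (k - f 0))`; undoing
the integrating factor yields the estimate.
-/

open Real Set

lemma Convex.antitoneOn_of_hasDerivWithinAt_nonpos {D : Set ℝ} (hD : Convex ℝ D)
    {g g' : ℝ → ℝ} (hg : ∀ t ∈ D, HasDerivWithinAt g (g' t) D t) (hg' : ∀ t ∈ D, g' t ≤ 0) :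
    AntitoneOn g D :=
  _root_.antitoneOn_of_hasDerivWithinAt_nonpos hD (fun t ht => (hg t ht).continuousWithinAt)
    (fun t ht => (hg t (interior_subset ht)).mono interior_subset)
    (fun t ht => hg' t (interior_subset ht))

section Riccati

variable {D : Set ℝ} {y y' : ℝ → ℝ}

lemma antitoneOn_sub_inv_of_deriv_le_neg_sq (hD : Convex ℝ D)
    (hy : ∀ t ∈ D, HasDerivWithinAt y (y' t) D t) (hle : ∀ t ∈ D, y' t ≤ -y t ^ 2)
    (hneg : ∀ t ∈ D, y t < 0) : AntitoneOn (fun t => t - (y t)⁻¹) D := by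
  refine hD.antitoneOn_of_hasDerivWithinAt_nonpos
    (fun t ht => (hasDerivWithinAt_id t D).sub ((hy t ht).inv (hneg t ht).ne)) fun t ht => ?_
  have hsq : 0 < y t ^ 2 := sq_pos_of_neg (hneg t ht)
  rw [sub_nonpos, neg_div, le_neg, div_le_iff₀ hsq]
  linarith [hle t ht]

theorem riccati_le (hD : Convex ℝ D) (hy : ∀ t ∈ D, HasDerivWithinAt y (y' t) D t)
    (hle : ∀ t ∈ D, y' t ≤ -y t ^ 2) {s t τ : ℝ} (hs : s ∈ D) (ht : t ∈ D) (hst : s ≤ t)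
    (hτ : 0 < τ) (hys : y s ≤ -τ⁻¹) : t - s < τ ∧ y t ≤ -1 / (τ - (t - s)) := by
  have hanti : AntitoneOn y D :=
    hD.antitoneOn_of_hasDerivWithinAt_nonpos hy fun u hu => (hle u hu).trans
      (neg_nonpos.mpr (sq_nonneg _))
  have hneg : ∀ u ∈ D ∩ Ici s, y u < 0 := fun u hu =>
    (hanti hs hu.1 hu.2).trans_lt (hys.trans_lt (neg_neg_of_pos (inv_pos.mpr hτ)))
  have hmono := antitoneOn_sub_inv_of_deriv_le_neg_sq (hD.inter (convex_Ici s))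
    (fun u hu => (hy u hu.1).mono inter_subset_left) (fun u hu => hle u hu.1) hneg
    ⟨hs, self_mem_Ici⟩ ⟨ht, hst⟩ hst
  have hyt : 0 < -(y t)⁻¹ := neg_pos.mpr (inv_lt_zero.mpr (hneg t ⟨ht, hst⟩))
  have hys' : -(y s)⁻¹ ≤ τ := by
    rw [← inv_neg]
    exact inv_le_of_inv_le₀ hτ (le_neg.mp hys)
  have hbound : -(y t)⁻¹ ≤ τ - (t - s) := by simp only at hmono; linarith
  refine ⟨by linarith, ?_⟩
  rw [neg_div, le_neg, one_div, ← inv_inv (-y t), inv_neg]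
  exact inv_anti₀ hyt hbound

end Riccati

lemma mul_exp_deriv_le_neg_sq {c k f x f' x' : ℝ} (hc : 0 ≤ c) (hfk : f ≤ k)
    (hineq : x' ≤ -x ^ 2 - c * x * f') :
    (x' + c * x * f') * exp (c * (f - k)) ≤ -(x * exp (c * (f - k))) ^ 2 := by
  have he₀ : 0 < exp (c * (f - k)) := exp_pos _
  have he₁ : exp (c * (f - k)) ≤ 1 :=
    exp_le_one_iff.mpr (mul_nonpos_of_nonneg_of_nonpos hc (sub_nonpos.mpr hfk))
  calc (x' + c * x * f') * exp (c * (f - k)) ≤ -x ^ 2 * exp (c * (f - k)) :=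
        mul_le_mul_of_nonneg_right (by linarith) he₀.le
    _ ≤ -(x * exp (c * (f - k))) ^ 2 := by
        nlinarith [mul_nonneg (mul_nonneg (sq_nonneg x) he₀.le) (sub_nonneg.mpr he₁)]

theorem raychaudhuri_decay {D : Set ℝ} (hD : Convex ℝ D) {c k δ : ℝ} (hc : 0 ≤ c) (hδ : 0 < δ)
    {f x f' x' : ℝ → ℝ} (hf : ∀ t ∈ D, HasDerivWithinAt f (f' t) D t)
    (hx : ∀ t ∈ D, HasDerivWithinAt x (x' t) D t) (hfk : ∀ t ∈ D, f t ≤ k)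
    (hineq : ∀ t ∈ D, x' t ≤ -x t ^ 2 - c * x t * f' t) {s t : ℝ} (hs : s ∈ D) (ht : t ∈ D)
    (hst : s ≤ t) (hxs : x s ≤ -δ) :
    t - s < 1 / δ * exp (c * (k - f s)) ∧
      x t ≤ -exp (c * (k - f t)) / (1 / δ * exp (c * (k - f s)) - (t - s)) := by
  set y : ℝ → ℝ := fun u => x u * exp (c * (f u - k))
  have hy : ∀ u ∈ D, HasDerivWithinAt y ((x' u + c * x u * f' u) * exp (c * (f u - k))) D u :=
    fun u hu => ((hx u hu).mul (((hf u hu).sub_const k).const_mul c).exp).congr_deriv (by ring)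
  have hys : y s ≤ -(1 / δ * exp (c * (k - f s)))⁻¹ := by
    have hinv : (1 / δ * exp (c * (k - f s)))⁻¹ = δ * exp (c * (f s - k)) := by
      rw [one_div, mul_inv, inv_inv, ← exp_neg, neg_mul_eq_mul_neg, neg_sub]
    rw [hinv, ← neg_mul]
    exact mul_le_mul_of_nonneg_right hxs (exp_pos _).le
  obtain ⟨hlt, hyt⟩ := riccati_le hD hy
    (fun u hu => mul_exp_deriv_le_neg_sq hc (hfk u hu) (hineq u hu)) hs ht hst (by positivity) hys
  refine ⟨hlt, ?_⟩
  have hxt : x t = y t * exp (c * (k - f t)) := by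
    rw [mul_assoc, ← exp_add, ← mul_add, sub_add_sub_cancel', sub_self, mul_zero, exp_zero,
      mul_one]
  rw [hxt, show ∀ a b : ℝ, -a / b = -1 / b * a from fun a b => by ring]
  exact mul_le_mul_of_nonneg_right hyt (exp_pos _).le

theorem stmt_2_general (n : ℕ) (hn : 2 ≤ n) (T : EReal) (k δ : ℝ) (hδ : 0 < δ)
    (f x f' x' : ℝ → ℝ)
    (D : Set ℝ) (hD : D = {t : ℝ | 0 ≤ t ∧ (t : EReal) < T})
    (hf : ∀ t ∈ D, HasDerivWithinAt f (f' t) D t)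
    (hx : ∀ t ∈ D, HasDerivWithinAt x (x' t) D t)
    (hfk : ∀ t ∈ D, f t ≤ k)
    (hx0 : x 0 ≤ -δ)
    (hineq : ∀ t ∈ D, x' t ≤ -(x t) ^ 2 - (2 / ((n : ℝ) - 1)) * x t * f' t) :
    ∀ t ∈ D, t < (1 / δ) * Real.exp (2 * (k - f 0) / ((n : ℝ) - 1)) ∧
      x t ≤ -Real.exp (2 * (k - f t) / ((n : ℝ) - 1)) /
        ((1 / δ) * Real.exp (2 * (k - f 0) / ((n : ℝ) - 1)) - t) := by
  have hc : 0 ≤ 2 / ((n : ℝ) - 1) :=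
    div_nonneg zero_le_two (sub_nonneg.mpr (by exact_mod_cast (by omega : 1 ≤ n)))
  have hconv : Convex ℝ D := by
    rw [hD, convex_iff_ordConnected]
    exact ⟨fun u hu v hv w hw => ⟨hu.1.trans hw.1, lt_of_le_of_lt (by exact_mod_cast hw.2) hv.2⟩⟩
  have hdiv : ∀ u : ℝ, 2 * u / ((n : ℝ) - 1) = 2 / ((n : ℝ) - 1) * u := fun u => by ring
  intro t ht
  have ht₀ : 0 ≤ t := by rw [hD] at ht; exact ht.1
  have h₀ : (0 : ℝ) ∈ D := by
    rw [hD] at ht ⊢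
    exact ⟨le_rfl, lt_of_le_of_lt (by exact_mod_cast ht₀) ht.2⟩
  simpa only [hdiv, sub_zero] using raychaudhuri_decay hconv hc hδ hf hx hfk hineq h₀ ht ht₀ hx0

/-- Sharpened estimate (2.11)–(2.12) from the proof of Lemma 2.1:
the quantitative decay bound keeping the `f`-dependent exponential factor. -/
theorem stmt_2 (n : ℕ) (hn : 2 ≤ n) (T : EReal) (hT : 0 < T) (k δ : ℝ) (hδ : 0 < δ)
    (f x f' x' : ℝ → ℝ)
    (D : Set ℝ) (hD : D = {t : ℝ | 0 ≤ t ∧ (t : EReal) < T})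
    (hf : ∀ t ∈ D, HasDerivWithinAt f (f' t) D t)
    (hx : ∀ t ∈ D, HasDerivWithinAt x (x' t) D t)
    (hfk : ∀ t ∈ D, f t ≤ k)
    (hx0 : x 0 ≤ -δ)
    (hineq : ∀ t ∈ D, x' t ≤ -(x t) ^ 2 - (2 / ((n : ℝ) - 1)) * x t * f' t) :
    ∀ t ∈ D, t < (1 / δ) * Real.exp (2 * (k - f 0) / ((n : ℝ) - 1)) ∧
      x t ≤ -Real.exp (2 * (k - f t) / ((n : ℝ) - 1)) /
        ((1 / δ) * Real.exp (2 * (k - f 0) / ((n : ℝ) - 1)) - t) :=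
  stmt_2_general n hn T k δ hδ f x f' x' D hD hf hx hfk hx0 hineq
end

section
/- Let n ≥ 2 be an integer, T ∈ (0, ∞] and k ∈ ℝ. Let f, x : [0, T) → ℝ be continuously differentiable with f(s) ≤ k for all s, and suppose x'(s) ≤ -x(s)² - (2/(n-1))·x(s)·f'(s) for all s ∈ [0, T). Let t ∈ [0, T) and assume x(s) < 0 for all s ∈ [0, t]. Then exp(-2f(t)/(n-1))/x(t) - exp(-2f(0)/(n-1))/x(0) ≥ ∫₀ᵗ exp(-2f(s)/(n-1)) ds ≥ t·exp(-2k/(n-1)). -/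
/-!
The function `G = exp (c f) / x` with `c = -2/(n-1)` has derivative
`exp (c f) (c f' x - x') / x²`, and the Raychaudhuri inequality `x' ≤ -x² + c x f'` says exactly
that this is at least `exp (c f)` wherever `x ≠ 0`. Integrating over `[0, t]` gives the first
bound; the second follows from `exp (c f) ≥ exp (c k)`, since `c < 0` and `f ≤ k`.
-/

open Real Set intervalIntegral

theorem exp_mul_le_div_sq_of_le_neg_sq_add {c F F' X X' : ℝ} (hX : X ≠ 0)
    (h : X' ≤ -X ^ 2 + c * X * F') :
    exp (c * F) ≤ (exp (c * F) * (c * F') * X - exp (c * F) * X') / X ^ 2 := by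
  rw [le_div_iff₀ (by positivity)]
  nlinarith [mul_le_mul_of_nonneg_left h (exp_pos (c * F)).le]

theorem integral_exp_mul_le_sub_of_le_neg_sq_add {a b c : ℝ} {f f' x x' : ℝ → ℝ} (hab : a ≤ b)
    (hf : ∀ s ∈ Icc a b, HasDerivWithinAt f (f' s) (Icc a b) s)
    (hx : ∀ s ∈ Icc a b, HasDerivWithinAt x (x' s) (Icc a b) s)
    (hx0 : ∀ s ∈ Icc a b, x s ≠ 0)
    (hineq : ∀ s ∈ Ioo a b, x' s ≤ -x s ^ 2 + c * x s * f' s) :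
    ∫ s in a..b, exp (c * f s) ≤ exp (c * f b) / x b - exp (c * f a) / x a := by
  have hG : ∀ s ∈ Icc a b, HasDerivWithinAt (fun s ↦ exp (c * f s) / x s)
      ((exp (c * f s) * (c * f' s) * x s - exp (c * f s) * x' s) / x s ^ 2) (Icc a b) s :=
    fun s hs ↦ (((hf s hs).const_mul c).exp).div (hx s hs) (hx0 s hs)
  have hfc : ContinuousOn f (Icc a b) := fun s hs ↦ (hf s hs).continuousWithinAt
  refine integral_le_sub_of_hasDeriv_right_of_le hab (fun s hs ↦ (hG s hs).continuousWithinAt)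
    (fun s hs ↦ ((hG s (Ioo_subset_Icc_self hs)).hasDerivAt
      (Icc_mem_nhds hs.1 hs.2)).hasDerivWithinAt)
    (continuousOn_const.mul hfc).rexp.integrableOn_Icc
    (fun s hs ↦ exp_mul_le_div_sq_of_le_neg_sq_add (hx0 s (Ioo_subset_Icc_self hs)) (hineq s hs))

theorem stmt_3_general (n : ℕ) (hn : 2 ≤ n) (T : EReal) (k : ℝ)
    (f x f' x' : ℝ → ℝ)
    (D : Set ℝ) (hD : D = {s : ℝ | 0 ≤ s ∧ (s : EReal) < T})
    (hf : ∀ s ∈ D, HasDerivWithinAt f (f' s) D s)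
    (hx : ∀ s ∈ D, HasDerivWithinAt x (x' s) D s)
    (hfk : ∀ s ∈ D, f s ≤ k)
    (hineq : ∀ s ∈ D, x' s ≤ -(x s) ^ 2 - (2 / ((n : ℝ) - 1)) * x s * f' s)
    (t : ℝ) (ht : t ∈ D)
    (hneg : ∀ s ∈ Set.Icc (0 : ℝ) t, x s < 0) :
    (∫ s in (0 : ℝ)..t, Real.exp (-2 * f s / ((n : ℝ) - 1))) ≤
        Real.exp (-2 * f t / ((n : ℝ) - 1)) / x t -
          Real.exp (-2 * f 0 / ((n : ℝ) - 1)) / x 0 ∧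
      t * Real.exp (-2 * k / ((n : ℝ) - 1)) ≤
        ∫ s in (0 : ℝ)..t, Real.exp (-2 * f s / ((n : ℝ) - 1)) := by
  subst hD
  have hsub : Icc 0 t ⊆ {s : ℝ | 0 ≤ s ∧ (s : EReal) < T} :=
    fun s hs ↦ ⟨hs.1, lt_of_le_of_lt (by exact_mod_cast hs.2) ht.2⟩
  have hn_pos : (0 : ℝ) < n - 1 := by
    have : (2 : ℝ) ≤ n := by exact_mod_cast hn
    linarith
  have hbound := integral_exp_mul_le_sub_of_le_neg_sq_add (c := -2 / ((n : ℝ) - 1)) ht.1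
    (fun s hs ↦ (hf s (hsub hs)).mono hsub) (fun s hs ↦ (hx s (hsub hs)).mono hsub)
    (fun s hs ↦ (hneg s hs).ne)
    (fun s hs ↦ by rw [neg_div]; linarith [hineq s (hsub (Ioo_subset_Icc_self hs))])
  simp only [div_mul_eq_mul_div] at hbound
  refine ⟨hbound, ?_⟩
  have hexp_ge : ∀ s ∈ Icc 0 t, exp (-2 * k / (n - 1)) ≤ exp (-2 * f s / (n - 1)) :=
    fun s hs ↦ exp_le_exp.2 (div_le_div_of_nonneg_right (by linarith [hfk s (hsub hs)]) hn_pos.le)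
  have hfc : ContinuousOn f (Icc 0 t) := fun s hs ↦ ((hf s (hsub hs)).continuousWithinAt).mono hsub
  have hint : IntervalIntegrable (fun s ↦ exp (-2 * f s / (n - 1))) MeasureTheory.volume 0 t :=
    ((continuousOn_const.mul hfc).div_const _).rexp.intervalIntegrable_of_Icc ht.1
  simpa using integral_mono_on ht.1 intervalIntegrable_const hint hexp_ge

/-- Integral inequality (2.10) from the proof of Lemma 2.1: on an interval where
`x < 0`, integrating `(exp(-2f/(n-1))/x)' ≥ exp(-2f/(n-1))` gives the stated bound. -/
theorem stmt_3 (n : ℕ) (hn : 2 ≤ n) (T : EReal) (hT : 0 < T) (k : ℝ)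
    (f x f' x' : ℝ → ℝ)
    (D : Set ℝ) (hD : D = {s : ℝ | 0 ≤ s ∧ (s : EReal) < T})
    (hf : ∀ s ∈ D, HasDerivWithinAt f (f' s) D s)
    (hf' : ContinuousOn f' D)
    (hx : ∀ s ∈ D, HasDerivWithinAt x (x' s) D s)
    (hx' : ContinuousOn x' D)
    (hfk : ∀ s ∈ D, f s ≤ k)
    (hineq : ∀ s ∈ D, x' s ≤ -(x s) ^ 2 - (2 / ((n : ℝ) - 1)) * x s * f' s)
    (t : ℝ) (ht : t ∈ D)
    (hneg : ∀ s ∈ Set.Icc (0 : ℝ) t, x s < 0) :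
    (∫ s in (0 : ℝ)..t, Real.exp (-2 * f s / ((n : ℝ) - 1))) ≤
        Real.exp (-2 * f t / ((n : ℝ) - 1)) / x t -
          Real.exp (-2 * f 0 / ((n : ℝ) - 1)) / x 0 ∧
      t * Real.exp (-2 * k / ((n : ℝ) - 1)) ≤
        ∫ s in (0 : ℝ)..t, Real.exp (-2 * f s / ((n : ℝ) - 1)) :=
  stmt_3_general n hn T k f x f' x' D hD hf hx hfk hineq t ht hneg
end

section
/- Let n ≥ 2 be an integer, T ∈ (0, ∞], k ∈ ℝ and δ > 0. Let f, x : [0, T) → ℝ be differentiable functions such that f(t) ≤ k for all t ∈ [0, T), x'(t) ≤ 1 - x(t)² - (2/(n-1))·x(t)·f'(t) for all t ∈ [0, T), and x(0) ≤ -(1+δ)·exp(2(k - f(0))/(n-1)). Set t₁ := arctanh(1/(1+δ)). Then for every t ∈ [0, T), t < t₁ and x(t) ≤ -exp(2(k - f(t))/(n-1))·coth(t₁ - t); in particular T ≤ t₁. -/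
/-!
Since `f ≤ k`, the weight `exp (2 (f - k) / (n - 1))` lies in `(0, 1]`, and multiplying `x` by it
absorbs the drift term: `g = x · exp (2 (f - k) / (n - 1))` satisfies the pure Riccati inequality
`g' ≤ 1 - g²`, whose model solution is `-coth (t₁ - t)`. Comparison goes through the linearising
substitution `u = (g + 1) / (g - 1) · e^{-2t}`, which is nondecreasing as long as `g < 1`; that
`g` stays below `-1` follows from a barrier argument. As `u(0) ≥ e^{-2 t₁}` while
`(g + 1) / (g - 1) < 1`, the inequality `u(t) ≥ e^{-2 t₁}` forces `t < t₁`, and unwinding it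
gives the bound.
-/

/-- Hyperbolic cotangent. -/
noncomputable def coth (t : ℝ) : ℝ := Real.cosh t / Real.sinh t

/-- Inverse hyperbolic tangent. -/
noncomputable def arctanh (y : ℝ) : ℝ := Real.log ((1 + y) / (1 - y)) / 2

open Set Real

lemma one_lt_coth {s : ℝ} (hs : 0 < s) : 1 < coth s := by
  rw [coth, one_lt_div (sinh_pos_iff.2 hs)]
  exact sinh_lt_cosh s

lemma coth_eq_one_add_exp_div {s : ℝ} (hs : s ≠ 0) :
    coth s = (1 + exp (-2 * s)) / (1 - exp (-2 * s)) := by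
  have hsinh : sinh s ≠ 0 := by rwa [Ne, sinh_eq_zero]
  have hW : exp (-2 * s) = exp (-s) * exp (-s) := by rw [← exp_add]; ring_nf
  have hW1 : 1 - exp (-2 * s) ≠ 0 := by
    rw [sub_ne_zero, ne_comm, Ne, exp_eq_one_iff]
    exact mul_ne_zero (by norm_num) hs
  have hinv : exp s * exp (-s) = 1 := by rw [← exp_add, add_neg_cancel, exp_zero]
  rw [coth, div_eq_div_iff hsinh hW1, cosh_eq, sinh_eq, hW]
  linear_combination (-exp (-s)) * hinv

lemma exp_neg_two_mul_arctanh {y : ℝ} (hy₀ : -1 < y) (hy₁ : y < 1) :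
    exp (-2 * arctanh y) = (1 - y) / (1 + y) := by
  have hpos : 0 < (1 + y) / (1 - y) := div_pos (by linarith) (by linarith)
  rw [arctanh, show -2 * (log ((1 + y) / (1 - y)) / 2) = -log ((1 + y) / (1 - y)) by ring,
    exp_neg, exp_log hpos, inv_div]

lemma arctanh_pos {y : ℝ} (hy₀ : 0 < y) (hy₁ : y < 1) : 0 < arctanh y := by
  have : 1 < (1 + y) / (1 - y) := by rw [one_lt_div (by linarith)]; linarith
  exact div_pos (log_pos this) two_pos

lemma coth_arctanh {y : ℝ} (hy₀ : 0 < y) (hy₁ : y < 1) : coth (arctanh y) = 1 / y := by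
  rw [coth_eq_one_add_exp_div (arctanh_pos hy₀ hy₁).ne',
    exp_neg_two_mul_arctanh (by linarith) hy₁]
  have : 1 + y ≠ 0 := by linarith
  rw [one_add_div this, one_sub_div this, div_div_div_cancel_right₀ this,
    div_eq_div_iff (by linarith) hy₀.ne']
  ring

lemma exp_neg_two_mul_le_div_iff {y s : ℝ} (hy : y < 1) :
    exp (-2 * s) ≤ (y + 1) / (y - 1) ↔ 0 < s ∧ y ≤ -coth s := by
  have hy1 : y - 1 < 0 := by linarith
  rw [le_div_iff_of_neg hy1]
  constructor
  · intro h
    have hs : 0 < s := by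
      by_contra! hs
      have : 1 ≤ exp (-2 * s) := one_le_exp (by linarith)
      nlinarith
    have hW : exp (-2 * s) < 1 := exp_lt_one_iff.2 (by linarith)
    refine ⟨hs, ?_⟩
    rw [coth_eq_one_add_exp_div hs.ne', ← neg_div, le_div_iff₀ (by linarith)]
    linarith
  · rintro ⟨hs, h⟩
    have hW : exp (-2 * s) < 1 := exp_lt_one_iff.2 (by linarith)
    rw [coth_eq_one_add_exp_div hs.ne', ← neg_div, le_div_iff₀ (by linarith)] at h
    linarith

section Riccati

variable {s : Set ℝ} {g g' : ℝ → ℝ}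

/-- Barrier argument against `-1 + ε e^{2(r - t)}`, which is a strict supersolution of
`g' = 1 - g²` above `-1`. -/
lemma le_neg_one_of_riccati (hs : s.OrdConnected) (hg : ∀ t ∈ s, HasDerivWithinAt g (g' t) s t)
    (hric : ∀ t ∈ s, g' t ≤ 1 - g t ^ 2) {a t : ℝ} (ha : a ∈ s) (hga : g a ≤ -1) (ht : t ∈ s)
    (hat : a ≤ t) : g t ≤ -1 := by
  have hsub : Icc a t ⊆ s := hs.out ha ht
  refine le_of_forall_pos_le_add fun ε hε => ?_
  have hB : ∀ r,
      HasDerivAt (fun r => -1 + ε * exp (2 * (r - t))) (ε * (exp (2 * (r - t)) * 2)) r :=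
    fun r => by simpa using
      ((((hasDerivAt_id r).sub_const t).const_mul 2).exp.const_mul ε).const_add (-1)
  have hbarrier := image_le_of_deriv_right_lt_deriv_boundary' (f := g)
    (fun r hr => (hg r (hsub hr)).continuousWithinAt.mono hsub)
    (fun r hr => (hg r (hsub (Ico_subset_Icc_self hr))).mono_of_mem_nhdsWithin
      (hs.mem_nhdsGE (hsub (Ico_subset_Icc_self hr)) ht hr.2))
    (by nlinarith [exp_pos (2 * (a - t))])
    (fun r _ => (hB r).continuousAt.continuousWithinAt) (fun r _ => (hB r).hasDerivWithinAt)
    (fun r hr hgr => by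
      have hη := mul_pos hε (exp_pos (2 * (r - t)))
      nlinarith [hric r (hsub (Ico_subset_Icc_self hr))])
    (right_mem_Icc.2 hat)
  simpa using hbarrier

lemma monotoneOn_riccati_substitution (hs : s.OrdConnected)
    (hg : ∀ t ∈ s, HasDerivWithinAt g (g' t) s t) (hric : ∀ t ∈ s, g' t ≤ 1 - g t ^ 2)
    (hlt : ∀ t ∈ s, g t < 1) :
    MonotoneOn (fun t => (g t + 1) / (g t - 1) * exp (-2 * t)) s := by
  have hderiv : ∀ t ∈ s, HasDerivWithinAt (fun t => (g t + 1) / (g t - 1) * exp (-2 * t))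
      (2 * (1 - g t ^ 2 - g' t) * exp (-2 * t) / (g t - 1) ^ 2) s t := by
    intro t ht
    have hne : g t - 1 ≠ 0 := sub_ne_zero.2 (hlt t ht).ne
    have hexp : HasDerivAt (fun t : ℝ => exp (-2 * t)) (exp (-2 * t) * -2) t := by
      simpa using ((hasDerivAt_id t).const_mul (-2 : ℝ)).exp
    refine ((((hg t ht).add_const 1).fun_div ((hg t ht).sub_const 1) hne).fun_mul
      hexp.hasDerivWithinAt).congr_deriv ?_
    field_simp
    ring
  refine monotoneOn_of_hasDerivWithinAt_nonneg hs.convex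
    (fun t ht => (hderiv t ht).continuousWithinAt)
    (fun t ht => (hderiv t (interior_subset ht)).mono interior_subset) fun t ht => ?_
  have : 0 ≤ 1 - g t ^ 2 - g' t := by linarith [hric t (interior_subset ht)]
  positivity

theorem riccati_comparison (hs : s.OrdConnected) (hg : ∀ t ∈ s, HasDerivWithinAt g (g' t) s t)
    (hric : ∀ t ∈ s, g' t ≤ 1 - g t ^ 2) {a t₁ : ℝ} (ha : a ∈ s) (hat₁ : a < t₁)
    (hga : g a ≤ -coth (t₁ - a)) {t : ℝ} (ht : t ∈ s) (hat : a ≤ t) :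
    t < t₁ ∧ g t ≤ -coth (t₁ - t) := by
  have hga₁ : g a ≤ -1 := hga.trans (by linarith [one_lt_coth (sub_pos.2 hat₁)])
  have hlt : ∀ r ∈ s ∩ Ici a, g r < 1 := fun r hr =>
    (le_neg_one_of_riccati hs hg hric ha hga₁ hr.1 hr.2).trans_lt (by norm_num)
  have hmono := monotoneOn_riccati_substitution (hs.inter ordConnected_Ici)
    (fun r hr => (hg r hr.1).mono inter_subset_left) (fun r hr => hric r hr.1) hlt
  have hua : exp (-2 * (t₁ - a)) ≤ (g a + 1) / (g a - 1) :=
    (exp_neg_two_mul_le_div_iff (hlt a ⟨ha, self_mem_Ici⟩)).2 ⟨sub_pos.2 hat₁, hga⟩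
  have hut : exp (-2 * (t₁ - t)) ≤ (g t + 1) / (g t - 1) :=
    calc exp (-2 * (t₁ - t)) = exp (-2 * (t₁ - a)) * exp (-2 * a) * exp (2 * t) := by
          rw [← exp_add, ← exp_add]; ring_nf
      _ ≤ (g a + 1) / (g a - 1) * exp (-2 * a) * exp (2 * t) := by gcongr
      _ ≤ (g t + 1) / (g t - 1) * exp (-2 * t) * exp (2 * t) :=
          mul_le_mul_of_nonneg_right (hmono ⟨ha, self_mem_Ici⟩ ⟨ht, hat⟩ hat) (exp_pos _).le
      _ = (g t + 1) / (g t - 1) := by rw [mul_assoc, ← exp_add]; simp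
  obtain ⟨hpos, hle⟩ := (exp_neg_two_mul_le_div_iff (hlt t ⟨ht, hat⟩)).1 hut
  exact ⟨by linarith, hle⟩

end Riccati

lemma riccati_of_weighted_riccati {m k f f' x x' : ℝ} (hm : 0 ≤ m) (hfk : f ≤ k)
    (h : x' ≤ 1 - x ^ 2 - 2 / m * x * f') :
    (x' + x * (2 * f' / m)) * exp (2 * (f - k) / m) ≤ 1 - (x * exp (2 * (f - k) / m)) ^ 2 := by
  have he₀ := exp_pos (2 * (f - k) / m)
  have he₁ : exp (2 * (f - k) / m) ≤ 1 :=
    exp_le_one_iff.2 (div_nonpos_of_nonpos_of_nonneg (by linarith) hm)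
  have h' : x' + x * (2 * f' / m) ≤ 1 - x ^ 2 := by
    have : 2 / m * x * f' = x * (2 * f' / m) := by ring
    linarith
  nlinarith [mul_le_mul_of_nonneg_right h' he₀.le,
    mul_nonneg (mul_nonneg (sq_nonneg x) he₀.le) (sub_nonneg.2 he₁)]

lemma exp_two_mul_sub_div_mul_exp_two_mul_sub_div (a b m : ℝ) :
    exp (2 * (a - b) / m) * exp (2 * (b - a) / m) = 1 := by
  rw [← exp_add, ← add_div, show 2 * (a - b) + 2 * (b - a) = 0 by ring, zero_div, exp_zero]

lemma ordConnected_setOf_nonneg_coe_lt (T : EReal) :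
    {t : ℝ | 0 ≤ t ∧ (t : EReal) < T}.OrdConnected :=
  ⟨fun _ ha _ hb _ hr => ⟨ha.1.trans hr.1, (EReal.coe_le_coe_iff.2 hr.2).trans_lt hb.2⟩⟩

lemma HasDerivWithinAt.mul_exp_weight {s : Set ℝ} {f x : ℝ → ℝ} {f' x' t k m : ℝ}
    (hf : HasDerivWithinAt f f' s t) (hx : HasDerivWithinAt x x' s t) :
    HasDerivWithinAt (fun r => x r * Real.exp (2 * (f r - k) / m))
      ((x' + x t * (2 * f' / m)) * Real.exp (2 * (f t - k) / m)) s t :=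
  (hx.fun_mul (((hf.sub_const k).const_mul 2).div_const m).exp).congr_deriv (by ring)

theorem stmt_5_general (n : ℕ) (hn : 2 ≤ n) (T : EReal) (k δ : ℝ) (hδ : 0 < δ)
    (f x f' x' : ℝ → ℝ)
    (D : Set ℝ) (hD : D = {t : ℝ | 0 ≤ t ∧ (t : EReal) < T})
    (hf : ∀ t ∈ D, HasDerivWithinAt f (f' t) D t)
    (hx : ∀ t ∈ D, HasDerivWithinAt x (x' t) D t)
    (hfk : ∀ t ∈ D, f t ≤ k)
    (hineq : ∀ t ∈ D, x' t ≤ 1 - (x t) ^ 2 - (2 / ((n : ℝ) - 1)) * x t * f' t)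
    (hx0 : x 0 ≤ -(1 + δ) * Real.exp (2 * (k - f 0) / ((n : ℝ) - 1)))
    (t₁ : ℝ) (ht₁ : t₁ = arctanh (1 / (1 + δ))) :
    (∀ t ∈ D, t < t₁ ∧
        x t ≤ -Real.exp (2 * (k - f t) / ((n : ℝ) - 1)) * coth (t₁ - t)) ∧
      T ≤ (t₁ : EReal) := by
  have hmem : ∀ t, t ∈ D ↔ 0 ≤ t ∧ (t : EReal) < T := fun t => by rw [hD]; rfl
  have hDord : D.OrdConnected := hD ▸ ordConnected_setOf_nonneg_coe_lt T
  have hm : (0 : ℝ) ≤ n - 1 := sub_nonneg.2 (by exact_mod_cast (by omega : 1 ≤ n))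
  have hweight t := exp_two_mul_sub_div_mul_exp_two_mul_sub_div (f t) k ((n : ℝ) - 1)
  have hy₀ : 0 < 1 / (1 + δ) := by positivity
  have hy₁ : 1 / (1 + δ) < 1 := by rw [div_lt_one (by linarith)]; linarith
  have ht₁pos : 0 < t₁ := ht₁ ▸ arctanh_pos hy₀ hy₁
  have hg0 : x 0 * exp (2 * (f 0 - k) / (n - 1)) ≤ -coth (t₁ - 0) := by
    rw [sub_zero, ht₁, coth_arctanh hy₀ hy₁, one_div_one_div]
    nlinarith [mul_le_mul_of_nonneg_right hx0 (exp_pos (2 * (f 0 - k) / (n - 1))).le, hweight 0]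
  have hcomp : ∀ t ∈ D, t < t₁ ∧ x t * exp (2 * (f t - k) / (n - 1)) ≤ -coth (t₁ - t) := by
    intro t ht
    obtain ⟨ht0, htT⟩ := (hmem t).1 ht
    have h0 : (0 : ℝ) ∈ D := (hmem 0).2 ⟨le_rfl, (EReal.coe_le_coe_iff.2 ht0).trans_lt htT⟩
    exact riccati_comparison hDord (fun r hr => (hf r hr).mul_exp_weight (hx r hr))
      (fun r hr => riccati_of_weighted_riccati hm (hfk r hr) (hineq r hr)) h0 ht₁pos hg0 ht ht0
  refine ⟨fun t ht => ⟨(hcomp t ht).1, ?_⟩, ?_⟩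
  · calc x t = x t * exp (2 * (f t - k) / (n - 1)) * exp (2 * (k - f t) / (n - 1)) := by
          rw [mul_assoc, hweight, mul_one]
      _ ≤ -coth (t₁ - t) * exp (2 * (k - f t) / (n - 1)) := by gcongr; exact (hcomp t ht).2
      _ = _ := by ring
  · by_contra! hT
    exact lt_irrefl t₁ (hcomp t₁ ((hmem t₁).2 ⟨ht₁pos.le, hT⟩)).1

/-- Lemma 2.2 (Raychaudhuri focusing estimate, `Ric_f ≥ -(n-1)` case):
a solution of `x' ≤ 1 - x² - (2/(n-1)) x f'` on `[0,T)` with `f ≤ k` and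
`x(0) ≤ -(1+δ)·exp(2(k-f(0))/(n-1))` satisfies
`x(t) ≤ -exp(2(k-f(t))/(n-1))·coth(t₁-t)`, `t₁ = arctanh(1/(1+δ))`;
in particular `T ≤ t₁`. -/
theorem stmt_5 (n : ℕ) (hn : 2 ≤ n) (T : EReal) (hT : 0 < T) (k δ : ℝ) (hδ : 0 < δ)
    (f x f' x' : ℝ → ℝ)
    (D : Set ℝ) (hD : D = {t : ℝ | 0 ≤ t ∧ (t : EReal) < T})
    (hf : ∀ t ∈ D, HasDerivWithinAt f (f' t) D t)
    (hx : ∀ t ∈ D, HasDerivWithinAt x (x' t) D t)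
    (hfk : ∀ t ∈ D, f t ≤ k)
    (hineq : ∀ t ∈ D, x' t ≤ 1 - (x t) ^ 2 - (2 / ((n : ℝ) - 1)) * x t * f' t)
    (hx0 : x 0 ≤ -(1 + δ) * Real.exp (2 * (k - f 0) / ((n : ℝ) - 1)))
    (t₁ : ℝ) (ht₁ : t₁ = arctanh (1 / (1 + δ))) :
    (∀ t ∈ D, t < t₁ ∧
        x t ≤ -Real.exp (2 * (k - f t) / ((n : ℝ) - 1)) * coth (t₁ - t)) ∧
      T ≤ (t₁ : EReal) :=
  stmt_5_general n hn T k δ hδ f x f' x' D hD hf hx hfk hineq hx0 t₁ ht₁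
end

section
/- Let n ≥ 2 be an integer, T ∈ (0, ∞] and δ > 0. Let f, x : [0, T) → ℝ be differentiable functions such that f'(t) ≤ 0 for all t ∈ [0, T) (f is nonincreasing), x'(t) ≤ 1 - x(t)² - (2/(n-1))·x(t)·f'(t) for all t ∈ [0, T), and x(0) ≤ -(1+δ). Then for every t ∈ [0, T), t < arctanh(1/(1+δ)) and x(t) ≤ -coth(arctanh(1/(1+δ)) - t); in particular T ≤ arctanh(1/(1+δ)). -/
/-! With `y = -x`, the `f'`-term has the right sign as long as `x < 0`, so `y' ≥ y² - 1`.
A barrier argument keeps `y ≥ 1 + δ`, and then `arcoth y + t` is nonincreasing because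
`(arcoth y)' = y' / (1 - y²) ≤ -1`. Hence `0 < arcoth (y t) ≤ arcoth (1 + δ) - t`, and since
`coth` is decreasing and inverts `arcoth`, `y t ≥ coth (arcoth (1 + δ) - t)`. Finally
`arctanh (1 / u) = arcoth u`. -/

open Set

noncomputable def arcoth (u : ℝ) : ℝ := Real.log ((u + 1) / (u - 1)) / 2

lemma arctanh_one_div {u : ℝ} (hu : u ≠ 0) : arctanh (1 / u) = arcoth u := by
  rw [arctanh, arcoth, one_add_div hu, one_sub_div hu, div_div_div_cancel_right₀ hu, add_comm]

lemma one_lt_add_one_div_sub_one {u : ℝ} (hu : 1 < u) : 1 < (u + 1) / (u - 1) :=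
  (one_lt_div (by linarith)).2 (by linarith)

lemma arcoth_pos {u : ℝ} (hu : 1 < u) : 0 < arcoth u :=
  half_pos (Real.log_pos (one_lt_add_one_div_sub_one hu))

lemma arcoth_le_arcoth {u v : ℝ} (hu : 1 < u) (huv : u ≤ v) : arcoth v ≤ arcoth u := by
  have hv : 1 < v := hu.trans_le huv
  refine div_le_div_of_nonneg_right
    (Real.log_le_log (zero_lt_one.trans (one_lt_add_one_div_sub_one hv)) ?_) zero_le_two
  rw [div_le_div_iff₀ (by linarith) (by linarith)]
  nlinarith

lemma coth_arcoth {u : ℝ} (hu : 1 < u) : coth (arcoth u) = u := by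
  have hE2 : Real.exp (arcoth u) ^ 2 = (u + 1) / (u - 1) := by
    rw [← Real.exp_nat_mul, arcoth, Nat.cast_ofNat, mul_div_cancel₀ _ two_ne_zero,
      Real.exp_log (zero_lt_one.trans (one_lt_add_one_div_sub_one hu))]
  have hE : Real.exp (arcoth u) ≠ 0 := (Real.exp_pos _).ne'
  rw [coth, Real.cosh_eq, Real.sinh_eq, Real.exp_neg]
  generalize Real.exp (arcoth u) = E at hE2 hE ⊢
  have hu₁ : u - 1 ≠ 0 := by linarith
  have hE1 : E ^ 2 - 1 ≠ 0 := by
    rw [hE2]; exact sub_ne_zero.2 (one_lt_add_one_div_sub_one hu).ne'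
  calc (E + E⁻¹) / 2 / ((E - E⁻¹) / 2) = (E ^ 2 + 1) / (E ^ 2 - 1) := by field_simp
    _ = u := by rw [hE2]; field_simp; ring

lemma coth_le_coth {a b : ℝ} (ha : 0 < a) (hab : a ≤ b) : coth b ≤ coth a := by
  have hsa := Real.sinh_pos_iff.2 ha
  have hsb := Real.sinh_pos_iff.2 (ha.trans_le hab)
  have hsba : 0 ≤ Real.sinh (b - a) := Real.sinh_nonneg_iff.2 (sub_nonneg.2 hab)
  rw [coth, coth, div_le_div_iff₀ hsb hsa]
  rw [Real.sinh_sub] at hsba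
  linarith

lemma hasDerivAt_arcoth {u : ℝ} (hu₁ : u + 1 ≠ 0) (hu₂ : u - 1 ≠ 0) :
    HasDerivAt arcoth (1 - u ^ 2)⁻¹ u := by
  have hq : HasDerivAt (fun v => (v + 1) / (v - 1)) (((u - 1) - (u + 1)) / (u - 1) ^ 2) u := by
    simpa using ((hasDerivAt_id u).add_const 1).fun_div ((hasDerivAt_id u).sub_const 1) hu₂
  refine ((hq.log (div_ne_zero hu₁ hu₂)).div_const 2).congr_deriv ?_
  have : 1 - u ^ 2 ≠ 0 := by
    rw [show 1 - u ^ 2 = -((u + 1) * (u - 1)) by ring]; exact neg_ne_zero.2 (mul_ne_zero hu₁ hu₂)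
  field_simp
  ring

lemma le_image_of_deriv_pos_of_eq {f f' : ℝ → ℝ} {a b B : ℝ}
    (hf : ∀ t ∈ Icc a b, HasDerivWithinAt f (f' t) (Icc a b) t) (ha : B ≤ f a)
    (hB : ∀ t ∈ Ico a b, f t = B → 0 < f' t) : ∀ t ∈ Icc a b, B ≤ f t := by
  have h := image_le_of_deriv_right_lt_deriv_boundary' (f := fun t => -f t) (f' := fun t => -f' t)
    (B := fun _ => -B) (B' := fun _ => 0) (fun t ht => (hf t ht).neg.continuousWithinAt)
    (fun t ht => ((hf t (Ico_subset_Icc_self ht)).mono_of_mem_nhdsWithin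
      (Icc_mem_nhdsGE_of_mem ht)).neg)
    (neg_le_neg ha) continuousOn_const (fun t _ => hasDerivWithinAt_const _ _ _)
    (fun t ht hft => neg_neg_of_pos (hB t ht (neg_inj.1 hft)))
  exact fun t ht => neg_le_neg_iff.1 (h ht)

lemma antitoneOn_arcoth_add_of_riccati {y y' : ℝ → ℝ} {a b : ℝ}
    (hy : ∀ t ∈ Icc a b, HasDerivWithinAt y (y' t) (Icc a b) t) (hy1 : ∀ t ∈ Icc a b, 1 < y t)
    (hric : ∀ t ∈ Icc a b, y t ^ 2 - 1 ≤ y' t) :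
    AntitoneOn (fun t => arcoth (y t) + t) (Icc a b) := by
  have hderiv : ∀ t ∈ Icc a b, HasDerivWithinAt (fun t => arcoth (y t) + t)
      ((1 - y t ^ 2)⁻¹ * y' t + 1) (Icc a b) t := fun t ht =>
    ((hasDerivAt_arcoth (by linarith [hy1 t ht]) (by linarith [hy1 t ht])).comp_hasDerivWithinAt
      t (hy t ht)).add (hasDerivWithinAt_id t _)
  refine antitoneOn_of_hasDerivWithinAt_nonpos (convex_Icc a b)
    (fun t ht => (hderiv t ht).continuousWithinAt)
    (fun t ht => (hderiv t (interior_subset ht)).mono interior_subset) fun t ht => ?_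
  replace ht := interior_subset ht
  have hneg : 1 - y t ^ 2 < 0 := by nlinarith [hy1 t ht]
  have : (1 - y t ^ 2)⁻¹ * y' t ≤ -1 := by
    rw [inv_mul_eq_div, div_le_iff_of_neg hneg]
    linarith [hric t ht]
  linarith

theorem sub_lt_arcoth_and_coth_le_of_riccati {y y' : ℝ → ℝ} {a b u : ℝ} (hab : a ≤ b)
    (hy : ∀ t ∈ Icc a b, HasDerivWithinAt y (y' t) (Icc a b) t)
    (hric : ∀ t ∈ Icc a b, 1 < y t → y t ^ 2 - 1 ≤ y' t) (hu : 1 < u) (hya : u ≤ y a) :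
    b - a < arcoth u ∧ coth (arcoth u - (b - a)) ≤ y b := by
  have hyu : ∀ t ∈ Icc a b, u ≤ y t := le_image_of_deriv_pos_of_eq hy hya fun t ht hyt => by
    have := hric t (Ico_subset_Icc_self ht) (hyt ▸ hu)
    nlinarith
  have hy1 : ∀ t ∈ Icc a b, 1 < y t := fun t ht => hu.trans_le (hyu t ht)
  have hb := right_mem_Icc.2 hab
  have hmono : arcoth (y b) + b ≤ arcoth (y a) + a :=
    antitoneOn_arcoth_add_of_riccati hy hy1 (fun t ht => hric t ht (hy1 t ht))
      (left_mem_Icc.2 hab) hb hab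
  have hya' : arcoth (y a) ≤ arcoth u := arcoth_le_arcoth hu hya
  have hpos : 0 < arcoth (y b) := arcoth_pos (hy1 b hb)
  refine ⟨by linarith, ?_⟩
  calc coth (arcoth u - (b - a)) ≤ coth (arcoth (y b)) := coth_le_coth hpos (by linarith)
    _ = y b := coth_arcoth (hy1 b hb)

theorem stmt_6_general (n : ℕ) (hn : 2 ≤ n) (T : EReal) (δ : ℝ) (hδ : 0 < δ)
    (x f' x' : ℝ → ℝ)
    (D : Set ℝ) (hD : D = {t : ℝ | 0 ≤ t ∧ (t : EReal) < T})
    (hx : ∀ t ∈ D, HasDerivWithinAt x (x' t) D t)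
    (hf' : ∀ t ∈ D, f' t ≤ 0)
    (hineq : ∀ t ∈ D, x' t ≤ 1 - (x t) ^ 2 - (2 / ((n : ℝ) - 1)) * x t * f' t)
    (hx0 : x 0 ≤ -(1 + δ)) :
    (∀ t ∈ D, t < arctanh (1 / (1 + δ)) ∧
        x t ≤ -coth (arctanh (1 / (1 + δ)) - t)) ∧
      T ≤ (arctanh (1 / (1 + δ)) : EReal) := by
  have hc : 0 ≤ 2 / ((n : ℝ) - 1) := by
    have : (2 : ℝ) ≤ n := by exact_mod_cast hn
    exact div_nonneg zero_le_two (by linarith)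
  have hriccati : ∀ t ∈ D, x t < 0 → x' t ≤ 1 - x t ^ 2 := fun t ht hxt => by
    nlinarith [hineq t ht, mul_nonneg hc (mul_nonneg_of_nonpos_of_nonpos hxt.le (hf' t ht))]
  have hIcc : ∀ t ∈ D, Icc 0 t ⊆ D := by
    subst hD
    exact fun t ht s hs => ⟨hs.1, (EReal.coe_le_coe_iff.2 hs.2).trans_lt ht.2⟩
  have hblowup : ∀ t ∈ D, t < arcoth (1 + δ) ∧ coth (arcoth (1 + δ) - t) ≤ -x t := by
    intro t ht
    have h0t : 0 ≤ t := (hD ▸ ht).1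
    simpa using sub_lt_arcoth_and_coth_le_of_riccati (y := fun s => -x s) (y' := fun s => -x' s) h0t
      (fun s hs => (hx s (hIcc t ht hs)).neg.mono (hIcc t ht))
      (fun s hs hxs => by nlinarith [hriccati s (hIcc t ht hs) (by linarith)])
      (by linarith : 1 < 1 + δ) (by linarith : 1 + δ ≤ -x 0)
  rw [arctanh_one_div (by positivity)]
  refine ⟨fun t ht => ⟨(hblowup t ht).1, le_neg_of_le_neg (hblowup t ht).2⟩, ?_⟩
  by_contra! hT
  exact lt_irrefl _ (hblowup _ (hD ▸ ⟨(arcoth_pos (by linarith)).le, hT⟩)).1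

/-- Corollary 2.3: when `f` is nonincreasing (`∇f` future causal), a solution of
`x' ≤ 1 - x² - (2/(n-1)) x f'` with `x(0) ≤ -(1+δ)` blows up to `-∞` at or before
`arctanh(1/(1+δ))`. -/
theorem stmt_6 (n : ℕ) (hn : 2 ≤ n) (T : EReal) (hT : 0 < T) (δ : ℝ) (hδ : 0 < δ)
    (f x f' x' : ℝ → ℝ)
    (D : Set ℝ) (hD : D = {t : ℝ | 0 ≤ t ∧ (t : EReal) < T})
    (hf : ∀ t ∈ D, HasDerivWithinAt f (f' t) D t)
    (hx : ∀ t ∈ D, HasDerivWithinAt x (x' t) D t)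
    (hf' : ∀ t ∈ D, f' t ≤ 0)
    (hineq : ∀ t ∈ D, x' t ≤ 1 - (x t) ^ 2 - (2 / ((n : ℝ) - 1)) * x t * f' t)
    (hx0 : x 0 ≤ -(1 + δ)) :
    (∀ t ∈ D, t < arctanh (1 / (1 + δ)) ∧
        x t ≤ -coth (arctanh (1 / (1 + δ)) - t)) ∧
      T ≤ (arctanh (1 / (1 + δ)) : EReal) :=
  stmt_6_general n hn T δ hδ x f' x' D hD hx hf' hineq hx0
end

section
/- Let n ≥ 2 be an integer, T ∈ (0, ∞], and let f, x : [0, T) → ℝ be differentiable with f'(t) ≤ 0 for all t ∈ [0, T) (f nonincreasing), x(0) ≤ -1, and x'(t) ≤ 1 - x(t)² - (2/(n-1))·x(t)·f'(t) for all t ∈ [0, T). Then x(t) ≤ -1 for all t ∈ [0, T). -/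
/-!
Put `y = x + 1` and `c = 2/(n-1) ≥ 0`. The inequality reads `y' ≤ (1 - x) y - c x f'`, and the
integrating factor `exp (c f - 2t)` absorbs both the unbounded term `c x f'` and the linear term:
`((x + 1) exp (c f - 2t))' ≤ (c f' - (x + 1)²) exp (c f - 2t) ≤ 0`. So `(x + 1) exp (c f - 2t)`
is nonincreasing, and it is `≤ 0` at `t = 0`.
-/

open Set Real

noncomputable def riccatiWeight (c : ℝ) (f x : ℝ → ℝ) (t : ℝ) : ℝ :=
  (x t + 1) * exp (c * f t - 2 * t)

section RiccatiInequality

variable {s : Set ℝ} {c : ℝ} {f x f' x' : ℝ → ℝ}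

lemma hasDerivWithinAt_riccatiWeight {t : ℝ} (hf : HasDerivWithinAt f (f' t) s t)
    (hx : HasDerivWithinAt x (x' t) s t) :
    HasDerivWithinAt (riccatiWeight c f x)
      ((x' t + (x t + 1) * (c * f' t - 2)) * exp (c * f t - 2 * t)) s t := by
  have hexp : HasDerivWithinAt (fun u ↦ exp (c * f u - 2 * u))
      (exp (c * f t - 2 * t) * (c * f' t - 2)) s t := by
    simpa using ((hf.const_mul c).sub ((hasDerivWithinAt_id t s).const_mul 2)).exp
  exact ((hx.add_const 1).fun_mul hexp).congr_deriv (by ring)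

lemma riccatiWeight_deriv_nonpos {t : ℝ} (hc : 0 ≤ c) (hf' : f' t ≤ 0)
    (hineq : x' t ≤ 1 - x t ^ 2 - c * x t * f' t) :
    (x' t + (x t + 1) * (c * f' t - 2)) * exp (c * f t - 2 * t) ≤ 0 := by
  have hcf : c * f' t ≤ 0 := mul_nonpos_of_nonneg_of_nonpos hc hf'
  have hbound : x' t + (x t + 1) * (c * f' t - 2) ≤ c * f' t - (x t + 1) ^ 2 := by
    linarith
  exact mul_nonpos_of_nonpos_of_nonneg (by linarith [sq_nonneg (x t + 1)]) (exp_pos _).le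

lemma antitoneOn_riccatiWeight (hs : Convex ℝ s) (hc : 0 ≤ c)
    (hf : ∀ t ∈ s, HasDerivWithinAt f (f' t) s t) (hx : ∀ t ∈ s, HasDerivWithinAt x (x' t) s t)
    (hf' : ∀ t ∈ s, f' t ≤ 0) (hineq : ∀ t ∈ s, x' t ≤ 1 - x t ^ 2 - c * x t * f' t) :
    AntitoneOn (riccatiWeight c f x) s := by
  have hw t (ht : t ∈ s) := hasDerivWithinAt_riccatiWeight (c := c) (hf t ht) (hx t ht)
  refine antitoneOn_of_hasDerivWithinAt_nonpos hs (fun t ht ↦ (hw t ht).continuousWithinAt)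
    (fun t ht ↦ (hw t (interior_subset ht)).mono interior_subset) fun t ht ↦ ?_
  have ht := interior_subset ht
  exact riccatiWeight_deriv_nonpos hc (hf' t ht) (hineq t ht)

lemma le_neg_one_of_riccati_ineq (hs : Convex ℝ s) (hc : 0 ≤ c)
    (hf : ∀ t ∈ s, HasDerivWithinAt f (f' t) s t) (hx : ∀ t ∈ s, HasDerivWithinAt x (x' t) s t)
    (hf' : ∀ t ∈ s, f' t ≤ 0) (hineq : ∀ t ∈ s, x' t ≤ 1 - x t ^ 2 - c * x t * f' t)
    {a b : ℝ} (ha : a ∈ s) (hb : b ∈ s) (hab : a ≤ b) (hxa : x a ≤ -1) : x b ≤ -1 := by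
  have hmono := antitoneOn_riccatiWeight hs hc hf hx hf' hineq ha hb hab
  have hwa : riccatiWeight c f x a ≤ 0 :=
    mul_nonpos_of_nonpos_of_nonneg (by linarith) (exp_pos _).le
  have hxb : x b + 1 ≤ 0 := nonpos_of_mul_nonpos_left (hmono.trans hwa) (exp_pos _)
  linarith

end RiccatiInequality

theorem stmt_11_general (n : ℕ) (hn : 2 ≤ n) (T : EReal)
    (f x f' x' : ℝ → ℝ)
    (D : Set ℝ) (hD : D = {t : ℝ | 0 ≤ t ∧ (t : EReal) < T})
    (hf : ∀ t ∈ D, HasDerivWithinAt f (f' t) D t)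
    (hx : ∀ t ∈ D, HasDerivWithinAt x (x' t) D t)
    (hf' : ∀ t ∈ D, f' t ≤ 0)
    (hx0 : x 0 ≤ -1)
    (hineq : ∀ t ∈ D, x' t ≤ 1 - (x t) ^ 2 - (2 / ((n : ℝ) - 1)) * x t * f' t) :
    ∀ t ∈ D, x t ≤ -1 := by
  have hc : 0 ≤ 2 / ((n : ℝ) - 1) := by
    have : (2 : ℝ) ≤ n := by exact_mod_cast hn
    exact div_nonneg zero_le_two (by linarith)
  have hDconv : Convex ℝ D := by
    refine convex_iff_ordConnected.mpr ⟨fun a ha b hb u hu ↦ ?_⟩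
    rw [hD] at ha hb ⊢
    exact ⟨ha.1.trans hu.1, (EReal.coe_le_coe_iff.mpr hu.2).trans_lt hb.2⟩
  intro t ht
  rw [hD] at ht
  have h0 : (0 : ℝ) ∈ D := hD ▸ ⟨le_rfl, (EReal.coe_le_coe_iff.mpr ht.1).trans_lt ht.2⟩
  exact le_neg_one_of_riccati_ineq hDconv hc hf hx hf' hineq h0 (hD ▸ ht) ht.1 hx0

/-- Analytic claim underlying the first step of the proof of Theorem 1.5:
a solution of `x' ≤ 1 - x² - (2/(n-1)) x f'` with `f` nonincreasing and
`x(0) ≤ -1` satisfies `x(t) ≤ -1` on `[0,T)`. -/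
theorem stmt_11 (n : ℕ) (hn : 2 ≤ n) (T : EReal) (hT : 0 < T)
    (f x f' x' : ℝ → ℝ)
    (D : Set ℝ) (hD : D = {t : ℝ | 0 ≤ t ∧ (t : EReal) < T})
    (hf : ∀ t ∈ D, HasDerivWithinAt f (f' t) D t)
    (hx : ∀ t ∈ D, HasDerivWithinAt x (x' t) D t)
    (hf' : ∀ t ∈ D, f' t ≤ 0)
    (hx0 : x 0 ≤ -1)
    (hineq : ∀ t ∈ D, x' t ≤ 1 - (x t) ^ 2 - (2 / ((n : ℝ) - 1)) * x t * f' t) :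
    ∀ t ∈ D, x t ≤ -1 :=
  stmt_11_general n hn T f x f' x' D hD hf hx hf' hx0 hineq
end
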